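/- Let X ~ Unif(√d·S^{d−1}), let a ∈ ℝ^d be any fixed vector, and let r > 0 satisfy r² = τ₂·d with τ ≤ τ₂, where τ = σ²/(1+σ²). Then P(‖a − X‖ ≤ r) ≤ (1 + 1/σ²)^{1/2} · exp(−d·(C(σ²) − (1/2)·log(τ₂/τ))), where C(σ²) = (1/2)·log(1+1/σ²). -/

import Mathlib

open MeasureTheory

/-- `μ` is the uniform (rotation-invariant) probability measure on the sphere of radius `r`
centered at the origin of `ℝ^d`. -/
def IsUniformOnSphere {d : ℕ} (μ : Measure (EuclideanSpace ℝ (Fin d))) (r : ℝ) : Prop :=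
  IsProbabilityMeasure μ ∧ μ (Metric.sphere (0 : EuclideanSpace ℝ (Fin d)) r) = 1 ∧
    ∀ T : EuclideanSpace ℝ (Fin d) ≃ₗᵢ[ℝ] EuclideanSpace ℝ (Fin d), μ.map T = μ

open Real Set
open scoped ENNReal RealInnerProductSpace

noncomputable section

lemma gausspi {k : ℕ} {κ : ℝ} (hκ : 0 < κ) :
    ∫⁻ y : Fin k → ℝ, ENNReal.ofReal (Real.exp (-(κ * ∑ i, (y i) ^ 2) / 2)) =
      ENNReal.ofReal ((2 * π / κ) ^ ((k : ℝ) / 2)) := by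
  have hκ2 : 0 < κ / 2 := by positivity
  have h1 : ∀ y : Fin k → ℝ, Real.exp (-(κ * ∑ i, (y i) ^ 2) / 2)
      = ∏ i, Real.exp (-(κ/2) * (y i) ^ 2) := by
    intro y
    have h2 : -(κ * ∑ i, (y i) ^ 2) / 2 = ∑ i, -(κ/2) * (y i) ^ 2 := by
      rw [← Finset.mul_sum]; ring
    rw [h2, Real.exp_sum]
  simp_rw [h1]
  rw [MeasureTheory.volume_pi]
  rw [← ofReal_integral_eq_lintegral_ofReal
    (Integrable.fintype_prod (f := fun _ (t : ℝ) => Real.exp (-(κ/2) * t ^ 2))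
      (fun _ => integrable_exp_neg_mul_sq hκ2))
    (Filter.Eventually.of_forall fun y =>
      Finset.prod_nonneg fun i _ => (Real.exp_pos _).le)]
  rw [MeasureTheory.integral_fintype_prod_eq_pow (fun t : ℝ => Real.exp (-(κ/2) * t ^ 2)),
    integral_gaussian]
  congr 1
  have h3 : π / (κ / 2) = 2 * π / κ := by field_simp
  have h4 : (0:ℝ) ≤ 2 * π / κ := by positivity
  rw [h3, Fintype.card_fin, Real.sqrt_eq_rpow, ← Real.rpow_natCast ((2*π/κ) ^ ((1:ℝ)/2)) k,
    ← Real.rpow_mul h4]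
  congr 1
  ring

lemma gausshalf : ∫⁻ t in Set.Ici (0:ℝ), ENNReal.ofReal (Real.exp (-t ^ 2 / 2)) =
    ENNReal.ofReal (Real.sqrt (π / 2)) := by
  rw [← MeasureTheory.restrict_Ioi_eq_restrict_Ici]
  have h1 : ∀ t : ℝ, -t ^ 2 / 2 = -(1/2 : ℝ) * t ^ 2 := fun t => by ring
  simp_rw [h1]
  rw [← ofReal_integral_eq_lintegral_ofReal
    ((integrable_exp_neg_mul_sq (by norm_num : (0:ℝ) < 1/2)).integrableOn)
    (Filter.Eventually.of_forall fun y => (Real.exp_pos _).le),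
    integral_gaussian_Ioi]
  congr 1
  rw [show π / (1/2 : ℝ) = 2 ^ 2 * (π / 2) by ring, Real.sqrt_mul (by positivity),
    Real.sqrt_sq (by norm_num : (0:ℝ) ≤ 2)]
  ring

lemma gausstail {a : ℝ} (ha : 0 ≤ a) :
    ∫⁻ t in Set.Ici a, ENNReal.ofReal (Real.exp (-t ^ 2 / 2)) ≤
      ENNReal.ofReal (Real.exp (-a ^ 2 / 2)) * ENNReal.ofReal (Real.sqrt (π / 2)) := by
  have himg : (fun u : ℝ => u + a) '' (Set.Ici 0) = Set.Ici a := by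
    ext u
    constructor
    · rintro ⟨x, hx, rfl⟩
      have : (0:ℝ) ≤ x := hx
      simp only [Set.mem_Ici]
      linarith
    · intro h
      exact ⟨u - a, by simp only [Set.mem_Ici] at h ⊢; linarith, by ring⟩
  have htrans := (measurePreserving_add_right (volume : Measure ℝ) a).setLIntegral_comp_emb
    (Homeomorph.addRight a).measurableEmbedding
    (fun t => ENNReal.ofReal (Real.exp (-t ^ 2 / 2))) (Set.Ici 0)
  rw [show ((fun x => x + a) '' Set.Ici 0 : Set ℝ) = Set.Ici a from himg] at htrans
  rw [← htrans]
  have hmono : ∫⁻ u in Set.Ici (0:ℝ), ENNReal.ofReal (Real.exp (-(u + a) ^ 2 / 2)) ≤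
      ∫⁻ u in Set.Ici (0:ℝ),
        ENNReal.ofReal (Real.exp (-a ^ 2 / 2)) * ENNReal.ofReal (Real.exp (-u ^ 2 / 2)) := by
    apply setLIntegral_mono' measurableSet_Ici
    intro u hu
    rw [← ENNReal.ofReal_mul (Real.exp_pos _).le, ← Real.exp_add]
    apply ENNReal.ofReal_le_ofReal
    apply Real.exp_le_exp.2
    have : 0 ≤ u := hu
    nlinarith [mul_nonneg this ha]
  calc ∫⁻ u in Set.Ici (0:ℝ), ENNReal.ofReal (Real.exp (-(u + a) ^ 2 / 2)) ≤ _ := hmono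
    _ = ENNReal.ofReal (Real.exp (-a ^ 2 / 2)) *
        ∫⁻ u in Set.Ici (0:ℝ), ENNReal.ofReal (Real.exp (-u ^ 2 / 2)) :=
      lintegral_const_mul' _ _ ENNReal.ofReal_ne_top
    _ = _ := by rw [gausshalf]

lemma cone_slice {c β q : ℝ} (hc0 : 0 < c) (hc1 : c < 1) (hq : 0 ≤ q)
    (hβ : β = c / Real.sqrt (1 - c ^ 2)) :
    {t : ℝ | c * Real.sqrt (t ^ 2 + q) ≤ t} = Set.Ici (β * Real.sqrt q) := by
  have h1 : (0:ℝ) < 1 - c ^ 2 := by nlinarith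
  have hβ0 : 0 ≤ β := by rw [hβ]; positivity
  have hβsq : β ^ 2 * (1 - c ^ 2) = c ^ 2 := by
    rw [hβ, div_pow, Real.sq_sqrt h1.le]
    field_simp
  ext t
  simp only [Set.mem_setOf_eq, Set.mem_Ici]
  constructor
  · intro h
    have ht0 : 0 ≤ t := le_trans (by positivity) h
    have h2 : c ^ 2 * (t ^ 2 + q) ≤ t ^ 2 := by
      have hsq := mul_self_le_mul_self (by positivity : (0:ℝ) ≤ c * Real.sqrt (t ^ 2 + q)) h
      have := Real.sq_sqrt (by positivity : (0:ℝ) ≤ t ^ 2 + q)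
      nlinarith
    have e : β ^ 2 * q * (1 - c ^ 2) = c ^ 2 * q := by
      rw [mul_right_comm, hβsq]
    have h3 : (β * Real.sqrt q) ^ 2 ≤ t ^ 2 := by
      rw [mul_pow, Real.sq_sqrt hq]
      nlinarith [h2, e, h1]
    calc β * Real.sqrt q = Real.sqrt ((β * Real.sqrt q) ^ 2) :=
          (Real.sqrt_sq (by positivity)).symm
      _ ≤ Real.sqrt (t ^ 2) := Real.sqrt_le_sqrt h3
      _ = t := Real.sqrt_sq ht0
  · intro h
    have ht0 : 0 ≤ t := le_trans (by positivity) h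
    have h3 : (β * Real.sqrt q) ^ 2 ≤ t ^ 2 := by
      apply pow_le_pow_left₀ (by positivity) h
    have e : β ^ 2 * q * (1 - c ^ 2) = c ^ 2 * q := by
      rw [mul_right_comm, hβsq]
    have h4 : c ^ 2 * (t ^ 2 + q) ≤ t ^ 2 := by
      rw [mul_pow, Real.sq_sqrt hq] at h3
      nlinarith [e, h1, h3]
    calc c * Real.sqrt (t ^ 2 + q) = Real.sqrt (c ^ 2 * (t ^ 2 + q)) := by
          rw [Real.sqrt_mul (by positivity), Real.sqrt_sq hc0.le]
      _ ≤ Real.sqrt (t ^ 2) := Real.sqrt_le_sqrt h4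
      _ = t := Real.sqrt_sq ht0

lemma exists_isometry {n : ℕ} (u v : EuclideanSpace ℝ (Fin n)) (h : ‖u‖ = ‖v‖) :
    ∃ T : EuclideanSpace ℝ (Fin n) ≃ₗᵢ[ℝ] EuclideanSpace ℝ (Fin n), T u = v :=
  ⟨Submodule.reflection (ℝ ∙ (u - v))ᗮ, Submodule.reflection_sub h⟩

lemma cap_meas {n : ℕ} (u : EuclideanSpace ℝ (Fin n)) (s : ℝ) :
    MeasurableSet {x : EuclideanSpace ℝ (Fin n) | s ≤ ⟪u, x⟫} :=
  (isClosed_le continuous_const (Continuous.inner continuous_const continuous_id)).measurableSet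

lemma cap_const {n : ℕ} {μ : Measure (EuclideanSpace ℝ (Fin n))}
    (hinv : ∀ T : EuclideanSpace ℝ (Fin n) ≃ₗᵢ[ℝ] EuclideanSpace ℝ (Fin n), μ.map T = μ)
    {u v : EuclideanSpace ℝ (Fin n)} (h : ‖u‖ = ‖v‖) (s : ℝ) :
    μ {x | s ≤ ⟪u, x⟫} = μ {x | s ≤ ⟪v, x⟫} := by
  obtain ⟨T, hT⟩ := exists_isometry u v h
  calc μ {x | s ≤ ⟪u, x⟫} = (μ.map T) {x | s ≤ ⟪v, x⟫} := by
        rw [Measure.map_apply T.continuous.measurable (cap_meas v s)]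
        congr 1
        ext x
        simp only [Set.mem_preimage, Set.mem_setOf_eq]
        rw [← hT, T.inner_map_map]
    _ = μ {x | s ≤ ⟪v, x⟫} := by rw [hinv]

def gmeas (n : ℕ) : Measure (EuclideanSpace ℝ (Fin n)) :=
  volume.withDensity fun g => ENNReal.ofReal (Real.exp (-‖g‖ ^ 2 / 2))

lemma gmeas_map {n : ℕ} (T : EuclideanSpace ℝ (Fin n) ≃ₗᵢ[ℝ] EuclideanSpace ℝ (Fin n)) :
    (gmeas n).map T = gmeas n := by
  ext s hs
  rw [Measure.map_apply T.continuous.measurable hs, gmeas,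
    withDensity_apply _ (hs.preimage T.continuous.measurable), withDensity_apply _ hs]
  calc ∫⁻ x in ⇑T ⁻¹' s, ENNReal.ofReal (Real.exp (-‖x‖ ^ 2 / 2)) ∂volume
      = ∫⁻ x in ⇑T ⁻¹' s, ENNReal.ofReal (Real.exp (-‖T x‖ ^ 2 / 2)) ∂volume := by
        simp_rw [T.norm_map]
    _ = ∫⁻ y in ⇑T '' (⇑T ⁻¹' s), ENNReal.ofReal (Real.exp (-‖y‖ ^ 2 / 2)) ∂volume :=
        T.measurePreserving.setLIntegral_comp_emb T.toHomeomorph.measurableEmbedding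
          (fun y => ENNReal.ofReal (Real.exp (-‖y‖ ^ 2 / 2))) (⇑T ⁻¹' s)
    _ = ∫⁻ y in s, ENNReal.ofReal (Real.exp (-‖y‖ ^ 2 / 2)) ∂volume := by
        rw [Set.image_preimage_eq s T.surjective]

lemma gmeas_apply {n : ℕ} (B : Set (EuclideanSpace ℝ (Fin n))) (hB : MeasurableSet B) :
    gmeas n B = ∫⁻ y in (MeasurableEquiv.toLp 2 (Fin n → ℝ)) ⁻¹' B,
      ENNReal.ofReal (Real.exp (-(∑ i, (y i) ^ 2) / 2)) ∂volume := by
  rw [gmeas, withDensity_apply _ hB]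
  have h := (MeasurePreserving.symm (MeasurableEquiv.toLp 2 (Fin n → ℝ)).symm
      (EuclideanSpace.volume_preserving_symm_measurableEquiv_toLp (Fin n))).setLIntegral_comp_emb
    (MeasurableEquiv.measurableEmbedding _)
    (fun g => ENNReal.ofReal (Real.exp (-‖g‖ ^ 2 / 2)))
    ((MeasurableEquiv.toLp 2 (Fin n → ℝ)).symm.symm ⁻¹' B)
  rw [Set.image_preimage_eq B (MeasurableEquiv.surjective _)] at h
  rw [← h]
  refine setLIntegral_congr_fun ((MeasurableEquiv.measurable _) hB) ?_
  refine fun y _ => ?_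
  have hnorm : ‖(MeasurableEquiv.toLp 2 (Fin n → ℝ)).symm.symm y‖ ^ 2 = ∑ i, (y i) ^ 2 := by
    rw [EuclideanSpace.norm_eq, Real.sq_sqrt (by positivity)]
    simp [MeasurableEquiv.coe_toLp, Real.norm_eq_abs, sq_abs]
  simp only [hnorm]

lemma gmeas_univ {n : ℕ} : gmeas n Set.univ = ENNReal.ofReal ((2 * π) ^ ((n : ℝ) / 2)) := by
  rw [gmeas_apply Set.univ MeasurableSet.univ, Set.preimage_univ, Measure.restrict_univ]
  have h := gausspi (k := n) (κ := 1) one_pos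
  simp only [one_mul, div_one] at h
  exact h

lemma gauss_cone_bound {m : ℕ} {c : ℝ} (hc0 : 0 < c) (hc1 : c < 1) :
    gmeas (m+1) {g | c * ‖g‖ ≤ g 0} ≤
      ENNReal.ofReal (Real.sqrt (π/2) * (2 * π * (1 - c ^ 2)) ^ ((m : ℝ)/2)) := by
  have h1c : (0:ℝ) < 1 - c ^ 2 := by nlinarith
  set β := c / Real.sqrt (1 - c ^ 2) with hβ
  have hβ0 : 0 ≤ β := by rw [hβ]; positivity
  have hβ1 : 1 + β ^ 2 = 1 / (1 - c ^ 2) := by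
    rw [hβ, div_pow, Real.sq_sqrt h1c.le]; field_simp; ring
  have hκ : (0:ℝ) < 1 + β ^ 2 := by positivity
  -- continuity of evaluation at 0
  have hcont : Continuous fun g : EuclideanSpace ℝ (Fin (m+1)) => g 0 :=
    (EuclideanSpace.proj (0 : Fin (m+1)) : EuclideanSpace ℝ (Fin (m+1)) →L[ℝ] ℝ).continuous
  have hBmeas : MeasurableSet {g : EuclideanSpace ℝ (Fin (m+1)) | c * ‖g‖ ≤ g 0} :=
    (isClosed_le (continuous_const.mul continuous_norm) hcont).measurableSet
  rw [gmeas_apply _ hBmeas]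
  -- the preimage set in pi coordinates
  have hBpre : (MeasurableEquiv.toLp 2 (Fin (m+1) → ℝ)) ⁻¹'
      {g : EuclideanSpace ℝ (Fin (m+1)) | c * ‖g‖ ≤ g 0}
      = {y : Fin (m+1) → ℝ | c * Real.sqrt (∑ i, (y i) ^ 2) ≤ y 0} := by
    ext y
    simp only [Set.mem_preimage, Set.mem_setOf_eq, EuclideanSpace.norm_eq,
      MeasurableEquiv.coe_toLp, PiLp.toLp_apply, Real.norm_eq_abs,
      sq_abs]
  rw [hBpre]
  -- move to the product space ℝ × (Fin m → ℝ)
  set ψ := MeasurableEquiv.piFinSuccAbove (fun _ : Fin (m+1) => ℝ) 0 with hψdef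
  have hψ := MeasureTheory.volume_preserving_piFinSuccAbove (fun _ : Fin (m+1) => ℝ) 0
  have hψs := MeasurePreserving.symm ψ hψ
  have hsum : ∀ (p : ℝ × (Fin m → ℝ)), ∑ i, (ψ.symm p i) ^ 2 = p.1 ^ 2 + ∑ j, (p.2 j) ^ 2 := by
    rintro ⟨t, z⟩
    rw [Fin.sum_univ_succAbove (fun i => (ψ.symm (t, z) i) ^ 2) 0]
    simp [hψdef, MeasurableEquiv.piFinSuccAbove_symm_apply]
  have hzero : ∀ (p : ℝ × (Fin m → ℝ)), ψ.symm p 0 = p.1 := by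
    rintro ⟨t, z⟩
    simp [hψdef, MeasurableEquiv.piFinSuccAbove_symm_apply]
  have htrans := hψs.setLIntegral_comp_emb (MeasurableEquiv.measurableEmbedding _)
    (fun y => ENNReal.ofReal (Real.exp (-(∑ i, (y i) ^ 2) / 2)))
    (ψ.symm ⁻¹' {y : Fin (m+1) → ℝ | c * Real.sqrt (∑ i, (y i) ^ 2) ≤ y 0})
  rw [Set.image_preimage_eq _ (MeasurableEquiv.surjective _)] at htrans
  rw [← htrans]
  -- rewrite the transported set
  have hSpre : ψ.symm ⁻¹' {y : Fin (m+1) → ℝ | c * Real.sqrt (∑ i, (y i) ^ 2) ≤ y 0}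
      = {p : ℝ × (Fin m → ℝ) | c * Real.sqrt (p.1 ^ 2 + ∑ j, (p.2 j) ^ 2) ≤ p.1} := by
    ext p
    simp only [Set.mem_preimage, Set.mem_setOf_eq, hsum p, hzero p]
  have hSmeas : MeasurableSet
      {p : ℝ × (Fin m → ℝ) | c * Real.sqrt (p.1 ^ 2 + ∑ j, (p.2 j) ^ 2) ≤ p.1} := by
    apply IsClosed.measurableSet
    apply isClosed_le _ continuous_fst
    apply continuous_const.mul
    apply Real.continuous_sqrt.comp
    apply Continuous.add (continuous_fst.pow 2)
    apply Continuous.comp (continuous_finset_sum _ fun j _ => (continuous_apply j).pow 2)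
      continuous_snd
  have hintg : ∀ p : ℝ × (Fin m → ℝ), ENNReal.ofReal (Real.exp (-(∑ i, (ψ.symm p i) ^ 2) / 2))
      = ENNReal.ofReal (Real.exp (-(p.1 ^ 2 + ∑ j, (p.2 j) ^ 2) / 2)) := by
    intro p; rw [hsum p]
  calc ∫⁻ p in ψ.symm ⁻¹' {y : Fin (m+1) → ℝ | c * Real.sqrt (∑ i, (y i) ^ 2) ≤ y 0},
        ENNReal.ofReal (Real.exp (-(∑ i, (ψ.symm p i) ^ 2) / 2)) ∂volume
      = ∫⁻ p in {p : ℝ × (Fin m → ℝ) | c * Real.sqrt (p.1 ^ 2 + ∑ j, (p.2 j) ^ 2) ≤ p.1},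
        ENNReal.ofReal (Real.exp (-(p.1 ^ 2 + ∑ j, (p.2 j) ^ 2) / 2)) ∂volume := by
        rw [hSpre]
        exact setLIntegral_congr_fun hSmeas (fun p _ => hintg p)
    _ = ∫⁻ p : ℝ × (Fin m → ℝ),
          Set.indicator {p : ℝ × (Fin m → ℝ) | c * Real.sqrt (p.1 ^ 2 + ∑ j, (p.2 j) ^ 2) ≤ p.1}
          (fun p => ENNReal.ofReal (Real.exp (-(p.1 ^ 2 + ∑ j, (p.2 j) ^ 2) / 2))) p ∂volume := by
        rw [lintegral_indicator hSmeas]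
    _ = ∫⁻ z : Fin m → ℝ, ∫⁻ t : ℝ,
          Set.indicator {p : ℝ × (Fin m → ℝ) | c * Real.sqrt (p.1 ^ 2 + ∑ j, (p.2 j) ^ 2) ≤ p.1}
          (fun p => ENNReal.ofReal (Real.exp (-(p.1 ^ 2 + ∑ j, (p.2 j) ^ 2) / 2))) (t, z)
          ∂volume ∂volume := by
        rw [Measure.volume_eq_prod]
        apply MeasureTheory.lintegral_prod_symm
        apply Measurable.aemeasurable
        apply Measurable.indicator _ hSmeas
        apply Measurable.ennreal_ofReal
        apply Continuous.measurable
        apply Real.continuous_exp.comp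
        apply Continuous.div_const
        apply Continuous.neg
        apply Continuous.add (continuous_fst.pow 2)
        apply Continuous.comp (continuous_finset_sum _ fun j _ => (continuous_apply j).pow 2)
          continuous_snd
    _ ≤ ∫⁻ z : Fin m → ℝ, ENNReal.ofReal (Real.sqrt (π/2)) *
          ENNReal.ofReal (Real.exp (-((1 + β ^ 2) * ∑ j, (z j) ^ 2) / 2)) ∂volume := by
        apply lintegral_mono
        intro z
        set q := ∑ j, (z j) ^ 2 with hq
        have hq0 : 0 ≤ q := Finset.sum_nonneg fun j _ => sq_nonneg _
        have hslice : ∀ t : ℝ,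
            Set.indicator {p : ℝ × (Fin m → ℝ) | c * Real.sqrt (p.1 ^ 2 + ∑ j, (p.2 j) ^ 2) ≤ p.1}
            (fun p => ENNReal.ofReal (Real.exp (-(p.1 ^ 2 + ∑ j, (p.2 j) ^ 2) / 2))) (t, z)
            = Set.indicator (Set.Ici (β * Real.sqrt q))
              (fun t => ENNReal.ofReal (Real.exp (-(t ^ 2 + q) / 2))) t := by
          intro t
          rw [← cone_slice hc0 hc1 hq0 hβ]
          simp only [Set.indicator_apply, Set.mem_setOf_eq, hq]
        simp_rw [hslice]
        rw [lintegral_indicator measurableSet_Ici]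
        have hsplit : ∀ t : ℝ, ENNReal.ofReal (Real.exp (-(t ^ 2 + q) / 2))
            = ENNReal.ofReal (Real.exp (-q / 2)) * ENNReal.ofReal (Real.exp (-t ^ 2 / 2)) := by
          intro t
          rw [← ENNReal.ofReal_mul (Real.exp_pos _).le, ← Real.exp_add]
          congr 2
          ring
        simp_rw [hsplit]
        rw [lintegral_const_mul' _ _ ENNReal.ofReal_ne_top]
        have htail := gausstail (a := β * Real.sqrt q) (by positivity)
        have hasq : (β * Real.sqrt q) ^ 2 = β ^ 2 * q := by
          rw [mul_pow, Real.sq_sqrt hq0]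
        rw [hasq] at htail
        calc ENNReal.ofReal (Real.exp (-q / 2)) *
              ∫⁻ t in Set.Ici (β * Real.sqrt q), ENNReal.ofReal (Real.exp (-t ^ 2 / 2))
            ≤ ENNReal.ofReal (Real.exp (-q / 2)) *
              (ENNReal.ofReal (Real.exp (-(β ^ 2 * q) / 2)) * ENNReal.ofReal (Real.sqrt (π/2))) :=
              mul_le_mul_right htail _
          _ = ENNReal.ofReal (Real.sqrt (π/2)) *
              ENNReal.ofReal (Real.exp (-((1 + β ^ 2) * q) / 2)) := by
              have hre : Real.exp (-q / 2) * (Real.exp (-(β ^ 2 * q) / 2) * Real.sqrt (π/2))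
                  = Real.sqrt (π/2) * Real.exp (-((1 + β ^ 2) * q) / 2) := by
                rw [show Real.exp (-q / 2) * (Real.exp (-(β ^ 2 * q) / 2) * Real.sqrt (π/2))
                    = (Real.exp (-q / 2) * Real.exp (-(β ^ 2 * q) / 2)) * Real.sqrt (π/2) by ring,
                  ← Real.exp_add, show -q / 2 + -(β ^ 2 * q) / 2 = -((1 + β ^ 2) * q) / 2 by ring]
                ring
              rw [← ENNReal.ofReal_mul (Real.exp_pos _).le,
                ← ENNReal.ofReal_mul (Real.exp_pos _).le, hre,
                ENNReal.ofReal_mul (Real.sqrt_nonneg _)]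
    _ = ENNReal.ofReal (Real.sqrt (π/2)) *
          ENNReal.ofReal ((2 * π / (1 + β ^ 2)) ^ ((m : ℝ)/2)) := by
        rw [lintegral_const_mul' _ _ ENNReal.ofReal_ne_top, gausspi hκ]
    _ = ENNReal.ofReal (Real.sqrt (π/2) * (2 * π * (1 - c ^ 2)) ^ ((m : ℝ)/2)) := by
        rw [← ENNReal.ofReal_mul (Real.sqrt_nonneg _)]
        congr 3
        rw [hβ1]
        field_simp

lemma cap_bound {m : ℕ} (μ : Measure (EuclideanSpace ℝ (Fin (m+1))))
    [IsProbabilityMeasure μ]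
    (hsph : μ (Metric.sphere (0 : EuclideanSpace ℝ (Fin (m+1))) (Real.sqrt ((m+1 : ℕ) : ℝ))) = 1)
    (hinv : ∀ T : EuclideanSpace ℝ (Fin (m+1)) ≃ₗᵢ[ℝ] EuclideanSpace ℝ (Fin (m+1)),
      μ.map T = μ)
    (u : EuclideanSpace ℝ (Fin (m+1))) (hu : ‖u‖ = 1)
    {c s : ℝ} (hc0 : 0 < c) (hc1 : c < 1) (hs : s = c * Real.sqrt ((m+1 : ℕ) : ℝ)) :
    μ {x | s ≤ ⟪u, x⟫} ≤ ENNReal.ofReal ((1 - c ^ 2) ^ ((m : ℝ) / 2)) := by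
  have h1c : (0:ℝ) < 1 - c ^ 2 := by nlinarith
  have hd0 : (0:ℝ) < ((m+1 : ℕ) : ℝ) := by positivity
  have hd' : 0 < Real.sqrt ((m+1 : ℕ) : ℝ) := Real.sqrt_pos.2 hd0
  set γ := gmeas (m+1) with hγdef
  haveI : SFinite γ := by rw [hγdef, gmeas]; infer_instance
  set A : Set (EuclideanSpace ℝ (Fin (m+1)) × EuclideanSpace ℝ (Fin (m+1))) :=
    {p | s * ‖p.1‖ ≤ ⟪p.1, p.2⟫} with hAdef
  have hAmeas : MeasurableSet A := by
    apply IsClosed.measurableSet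
    exact isClosed_le ((continuous_const.mul continuous_norm).comp continuous_fst)
      continuous_inner
  set p0 := μ {x | s ≤ ⟪u, x⟫} with hp0
  -- first evaluation of the product measure
  have hγ0 : γ {0} = 0 := by
    rw [hγdef, gmeas]
    exact (withDensity_absolutelyContinuous volume _) (measure_singleton 0)
  have key1 : (γ.prod μ) A = p0 * γ Set.univ := by
    rw [Measure.prod_apply hAmeas]
    have hae : ∀ᵐ g ∂γ, μ (Prod.mk g ⁻¹' A) = p0 := by
      have : ∀ g : EuclideanSpace ℝ (Fin (m+1)), g ≠ 0 → μ (Prod.mk g ⁻¹' A) = p0 := by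
        intro g hg
        have hgn : (0:ℝ) < ‖g‖ := norm_pos_iff.2 hg
        have hset : Prod.mk g ⁻¹' A = {x | s ≤ ⟪‖g‖⁻¹ • g, x⟫} := by
          ext x
          simp only [hAdef, Set.mem_preimage, Set.mem_setOf_eq, real_inner_smul_left]
          rw [inv_mul_eq_div, le_div_iff₀ hgn]
        rw [hset, hp0]
        refine (cap_const hinv ?_ s).symm
        rw [hu, norm_smul]
        simp [abs_of_pos (inv_pos.2 hgn), inv_mul_cancel₀ hgn.ne']
      filter_upwards [measure_eq_zero_iff_ae_notMem.1 hγ0] with g hg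
      exact this g (by simpa using hg)
    rw [lintegral_congr_ae hae, lintegral_const]
  -- second evaluation
  have hsph_meas : MeasurableSet
      (Metric.sphere (0 : EuclideanSpace ℝ (Fin (m+1))) (Real.sqrt ((m+1 : ℕ) : ℝ))) :=
    Metric.isClosed_sphere.measurableSet
  have hcompl : μ (Metric.sphere (0 : EuclideanSpace ℝ (Fin (m+1)))
      (Real.sqrt ((m+1 : ℕ) : ℝ)))ᶜ = 0 := by
    rw [measure_compl hsph_meas (measure_ne_top μ _), hsph]
    simp
  have key2 : (γ.prod μ) A ≤
      ENNReal.ofReal (Real.sqrt (π/2) * (2 * π * (1 - c ^ 2)) ^ ((m : ℝ)/2)) := by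
    rw [Measure.prod_apply_symm hAmeas]
    have hae : ∀ᵐ x ∂μ, γ ((fun g => (g, x)) ⁻¹' A) ≤
        ENNReal.ofReal (Real.sqrt (π/2) * (2 * π * (1 - c ^ 2)) ^ ((m : ℝ)/2)) := by
      filter_upwards [measure_eq_zero_iff_ae_notMem.1 hcompl] with x hx
      have hxn : ‖x‖ = Real.sqrt ((m+1 : ℕ) : ℝ) := by
        simpa [mem_sphere_zero_iff_norm] using hx
      -- rotate x to the first axis
      set e₀ : EuclideanSpace ℝ (Fin (m+1)) := EuclideanSpace.single 0 1 with he₀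
      set x' : EuclideanSpace ℝ (Fin (m+1)) := Real.sqrt ((m+1 : ℕ) : ℝ) • e₀ with hx'
      have hx'n : ‖x'‖ = ‖x‖ := by
        rw [hx', norm_smul, he₀, EuclideanSpace.norm_single, hxn]
        simp [abs_of_pos hd']
      obtain ⟨T, hT⟩ := exists_isometry x' x hx'n
      have hsec_meas : MeasurableSet {g : EuclideanSpace ℝ (Fin (m+1)) | s * ‖g‖ ≤ ⟪g, x⟫} := by
        apply IsClosed.measurableSet
        exact isClosed_le (continuous_const.mul continuous_norm)
          (Continuous.inner continuous_id continuous_const)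
      have hsec : (fun g => (g, x)) ⁻¹' A = {g | s * ‖g‖ ≤ ⟪g, x⟫} := rfl
      have hrot : γ {g | s * ‖g‖ ≤ ⟪g, x⟫} = γ {g | c * ‖g‖ ≤ g 0} := by
        conv_lhs => rw [hγdef, ← gmeas_map T, ← hγdef]
        rw [Measure.map_apply T.continuous.measurable hsec_meas]
        congr 1
        ext g
        simp only [Set.mem_preimage, Set.mem_setOf_eq, T.norm_map]
        rw [← hT, T.inner_map_map, hx', real_inner_smul_right, he₀]
        have hinner : ⟪g, EuclideanSpace.single (0 : Fin (m+1)) (1:ℝ)⟫ = g 0 := by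
          simp [EuclideanSpace.inner_single_right]
        rw [hinner, hs]
        constructor
        · intro h
          have := (mul_le_mul_iff_right₀ hd').mp (by
            calc Real.sqrt ((m+1 : ℕ) : ℝ) * (c * ‖g‖)
                = c * Real.sqrt ((m+1 : ℕ) : ℝ) * ‖g‖ := by ring
              _ ≤ Real.sqrt ((m+1 : ℕ) : ℝ) * g 0 := h)
          exact this
        · intro h
          calc c * Real.sqrt ((m+1 : ℕ) : ℝ) * ‖g‖
              = Real.sqrt ((m+1 : ℕ) : ℝ) * (c * ‖g‖) := by ring
            _ ≤ Real.sqrt ((m+1 : ℕ) : ℝ) * g 0 := by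
                exact (mul_le_mul_iff_right₀ hd').mpr h
      rw [hsec, hrot, hγdef]
      exact gauss_cone_bound hc0 hc1
    calc ∫⁻ x, γ ((fun g => (g, x)) ⁻¹' A) ∂μ
        ≤ ∫⁻ _, ENNReal.ofReal (Real.sqrt (π/2) * (2 * π * (1 - c ^ 2)) ^ ((m : ℝ)/2)) ∂μ :=
          lintegral_mono_ae hae
      _ = ENNReal.ofReal (Real.sqrt (π/2) * (2 * π * (1 - c ^ 2)) ^ ((m : ℝ)/2)) := by
          rw [lintegral_const, measure_univ, mul_one]
  -- combine
  have hγuniv : γ Set.univ = ENNReal.ofReal ((2 * π) ^ (((m+1 : ℕ) : ℝ) / 2)) := gmeas_univ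
  have harith : Real.sqrt (π/2) * (2 * π * (1 - c ^ 2)) ^ ((m : ℝ)/2) ≤
      (1 - c ^ 2) ^ ((m : ℝ)/2) * (2 * π) ^ (((m+1 : ℕ) : ℝ) / 2) := by
    have h2π : (0:ℝ) < 2 * π := by positivity
    have e1 : (2 * π * (1 - c ^ 2)) ^ ((m : ℝ)/2)
        = (2 * π) ^ ((m : ℝ)/2) * (1 - c ^ 2) ^ ((m : ℝ)/2) :=
      Real.mul_rpow h2π.le h1c.le
    have e2 : (2 * π) ^ (((m+1 : ℕ) : ℝ) / 2)
        = (2 * π) ^ ((m : ℝ)/2) * (2 * π) ^ ((1:ℝ)/2) := by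
      rw [← Real.rpow_add h2π]
      congr 1
      push_cast
      ring
    have e3 : Real.sqrt (π/2) ≤ (2 * π) ^ ((1:ℝ)/2) := by
      rw [Real.sqrt_eq_rpow]
      apply Real.rpow_le_rpow (by positivity) (by nlinarith [Real.pi_pos]) (by norm_num)
    rw [e1, e2]
    calc Real.sqrt (π/2) * ((2 * π) ^ ((m : ℝ)/2) * (1 - c ^ 2) ^ ((m : ℝ)/2))
        ≤ (2 * π) ^ ((1:ℝ)/2) * ((2 * π) ^ ((m : ℝ)/2) * (1 - c ^ 2) ^ ((m : ℝ)/2)) := by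
          apply mul_le_mul_of_nonneg_right e3
          positivity
      _ = (1 - c ^ 2) ^ ((m : ℝ)/2) * ((2 * π) ^ ((m : ℝ)/2) * (2 * π) ^ ((1:ℝ)/2)) := by ring
  have hfinal : p0 * γ Set.univ ≤
      ENNReal.ofReal ((1 - c ^ 2) ^ ((m : ℝ)/2)) * γ Set.univ := by
    rw [← key1]
    refine le_trans key2 ?_
    rw [hγuniv, ← ENNReal.ofReal_mul (by positivity)]
    exact ENNReal.ofReal_le_ofReal harith
  have hγ0' : γ Set.univ ≠ 0 := by
    rw [hγuniv]
    simp only [ne_eq, ENNReal.ofReal_eq_zero, not_le]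
    positivity
  have hγtop : γ Set.univ ≠ ⊤ := by rw [hγuniv]; exact ENNReal.ofReal_ne_top
  exact (ENNReal.mul_le_mul_iff_left hγ0' hγtop).mp hfinal


set_option maxHeartbeats 1000000

/-- For `X ~ Unif(√d·S^{d−1})`, a fixed `a ∈ ℝ^d` and a radius `r > 0` with `r² = τ₂·d`,
`τ ≤ τ₂` where `τ = σ²/(1+σ²)`:
`P(‖a − X‖ ≤ r) ≤ (1 + 1/σ²)^{1/2} · exp(−d·(C(σ²) − (1/2)log(τ₂/τ)))`,
with `C(σ²) = (1/2)·log(1 + 1/σ²)`. -/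

theorem uniform_sphere_ball_bound {d : ℕ} (μ : Measure (EuclideanSpace ℝ (Fin d)))
    (hμ : IsUniformOnSphere μ (Real.sqrt d)) (a : EuclideanSpace ℝ (Fin d))
    (σ : ℝ) (hσ : 0 < σ) (τ₂ r : ℝ) (hr : 0 < r) (hr2 : r ^ 2 = τ₂ * d)
    (hτ : σ ^ 2 / (1 + σ ^ 2) ≤ τ₂) :
    (μ {x | ‖a - x‖ ≤ r}).toReal ≤
      (1 + 1 / σ ^ 2) ^ ((1 : ℝ) / 2) *
        Real.exp (-(d * ((1 / 2) * Real.log (1 + 1 / σ ^ 2) -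
          (1 / 2) * Real.log (τ₂ / (σ ^ 2 / (1 + σ ^ 2)))))) := by
  obtain ⟨hprob, hsph, hinv⟩ := hμ
  haveI := hprob
  have hσ2 : (0:ℝ) < σ ^ 2 := by positivity
  have h1σ : (0:ℝ) < 1 + σ ^ 2 := by positivity
  set τ : ℝ := σ ^ 2 / (1 + σ ^ 2) with hτdef
  have hτpos : 0 < τ := by rw [hτdef]; positivity
  have hτlt1 : τ < 1 := by rw [hτdef, div_lt_one h1σ]; linarith
  have hτ2pos : 0 < τ₂ := lt_of_lt_of_le hτpos hτ
  have h1 : 1 + 1 / σ ^ 2 = 1 / τ := by rw [hτdef]; field_simp; ring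
  have hRHS : (1 + 1 / σ ^ 2) ^ ((1 : ℝ) / 2) *
      Real.exp (-(d * ((1 / 2) * Real.log (1 + 1 / σ ^ 2) - (1 / 2) * Real.log (τ₂ / τ))))
      = (1 / τ) ^ ((1 : ℝ) / 2) * τ₂ ^ ((d : ℝ) / 2) := by
    rw [h1, show Real.log (1 / τ) = -Real.log τ by rw [one_div, Real.log_inv],
      Real.log_div hτ2pos.ne' hτpos.ne',
      show -((d : ℝ) * ((1 / 2) * -Real.log τ - (1 / 2) * (Real.log τ₂ - Real.log τ)))
        = Real.log τ₂ * ((d : ℝ) / 2) by ring,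
      ← Real.rpow_def_of_pos hτ2pos]
  rw [hRHS]
  rcases le_or_gt 1 τ₂ with hge | hlt
  · -- trivial case τ₂ ≥ 1
    have hLHS1 : (μ {x | ‖a - x‖ ≤ r}).toReal ≤ 1 := by
      have h := ENNReal.toReal_mono (by norm_num) (prob_le_one (μ := μ) (s := {x | ‖a - x‖ ≤ r}))
      simpa using h
    have hb1 : (1:ℝ) ≤ (1 / τ) ^ ((1 : ℝ) / 2) := by
      calc (1:ℝ) = 1 ^ ((1:ℝ)/2) := (Real.one_rpow _).symm
        _ ≤ (1 / τ) ^ ((1:ℝ)/2) := by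
            apply Real.rpow_le_rpow zero_le_one _ (by norm_num)
            rw [le_one_div (by norm_num) hτpos]
            linarith
    have hb2 : (1:ℝ) ≤ τ₂ ^ ((d : ℝ) / 2) := by
      calc (1:ℝ) = 1 ^ ((d:ℝ)/2) := (Real.one_rpow _).symm
        _ ≤ τ₂ ^ ((d:ℝ)/2) := Real.rpow_le_rpow zero_le_one hge (by positivity)
    calc (μ {x | ‖a - x‖ ≤ r}).toReal ≤ 1 := hLHS1
      _ = 1 * 1 := (one_mul 1).symm
      _ ≤ (1 / τ) ^ ((1 : ℝ) / 2) * τ₂ ^ ((d : ℝ) / 2) :=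
          mul_le_mul hb1 hb2 zero_le_one (by positivity)
  · -- main case τ₂ < 1
    have hd : d ≠ 0 := by
      rintro rfl
      rw [Nat.cast_zero, mul_zero] at hr2
      nlinarith
    obtain ⟨m, rfl⟩ : ∃ m, d = m + 1 := ⟨d - 1, (Nat.succ_pred_eq_of_pos (Nat.pos_of_ne_zero hd)).symm⟩
    have hdR : (0:ℝ) < ((m + 1 : ℕ) : ℝ) := by positivity
    have hr2lt : r ^ 2 < ((m + 1 : ℕ) : ℝ) := by
      rw [hr2]
      nlinarith
    set s : ℝ := Real.sqrt (((m + 1 : ℕ) : ℝ) - r ^ 2) with hsdef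
    have hs2 : s ^ 2 = ((m + 1 : ℕ) : ℝ) - r ^ 2 := Real.sq_sqrt (by linarith)
    have hspos : 0 < s := Real.sqrt_pos.2 (by linarith)
    have hsqd : (0:ℝ) < Real.sqrt ((m + 1 : ℕ) : ℝ) := Real.sqrt_pos.2 hdR
    set c : ℝ := s / Real.sqrt ((m + 1 : ℕ) : ℝ) with hcdef
    have hc0 : 0 < c := by rw [hcdef]; positivity
    have hceq : s = c * Real.sqrt ((m + 1 : ℕ) : ℝ) := by
      rw [hcdef]; field_simp
    have hc2 : c ^ 2 = 1 - τ₂ := by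
      rw [hcdef, div_pow, hs2, Real.sq_sqrt hdR.le, hr2]
      field_simp
    have hc1 : c < 1 := by nlinarith
    have hsph_meas : MeasurableSet
        (Metric.sphere (0 : EuclideanSpace ℝ (Fin (m + 1))) (Real.sqrt ((m + 1 : ℕ) : ℝ))) :=
      Metric.isClosed_sphere.measurableSet
    have hcompl : μ (Metric.sphere (0 : EuclideanSpace ℝ (Fin (m + 1)))
        (Real.sqrt ((m + 1 : ℕ) : ℝ)))ᶜ = 0 := by
      rw [measure_compl hsph_meas (measure_ne_top μ _), hsph]
      simp
    have hrltsq : r < Real.sqrt ((m + 1 : ℕ) : ℝ) := by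
      calc r = Real.sqrt (r ^ 2) := (Real.sqrt_sq hr.le).symm
        _ < Real.sqrt ((m + 1 : ℕ) : ℝ) := Real.sqrt_lt_sqrt (by positivity) hr2lt
    by_cases ha : a = 0
    · -- a = 0 : the ball misses the sphere
      have hsub : {x : EuclideanSpace ℝ (Fin (m + 1)) | ‖a - x‖ ≤ r} ⊆
          (Metric.sphere (0 : EuclideanSpace ℝ (Fin (m + 1)))
            (Real.sqrt ((m + 1 : ℕ) : ℝ)))ᶜ := by
        intro x hx hmem
        simp only [Set.mem_setOf_eq] at hx
        have hxn : ‖x‖ = Real.sqrt ((m + 1 : ℕ) : ℝ) := mem_sphere_zero_iff_norm.1 hmem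
        have : ‖a - x‖ = ‖x‖ := by rw [ha, zero_sub, norm_neg]
        rw [this, hxn] at hx
        exact absurd hx (not_le.2 hrltsq)
      have hz : μ {x | ‖a - x‖ ≤ r} = 0 := measure_mono_null hsub hcompl
      rw [hz]
      simp only [ENNReal.toReal_zero]
      positivity
    · set u : EuclideanSpace ℝ (Fin (m + 1)) := ‖a‖⁻¹ • a with hudef
      have hu : ‖u‖ = 1 := norm_smul_inv_norm ha
      have hna : (0:ℝ) < ‖a‖ := norm_pos_iff.2 ha
      have hsub : {x : EuclideanSpace ℝ (Fin (m + 1)) | ‖a - x‖ ≤ r} ⊆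
          {x | s ≤ ⟪u, x⟫} ∪ (Metric.sphere (0 : EuclideanSpace ℝ (Fin (m + 1)))
            (Real.sqrt ((m + 1 : ℕ) : ℝ)))ᶜ := by
        intro x hx
        by_cases hxs : x ∈ Metric.sphere (0 : EuclideanSpace ℝ (Fin (m + 1)))
            (Real.sqrt ((m + 1 : ℕ) : ℝ))
        · left
          have hxn : ‖x‖ = Real.sqrt ((m + 1 : ℕ) : ℝ) := mem_sphere_zero_iff_norm.1 hxs
          have h2 : ‖a - x‖ ^ 2 ≤ r ^ 2 := pow_le_pow_left₀ (norm_nonneg _) hx 2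
          have hexp : ‖a - x‖ ^ 2 = ‖a‖ ^ 2 - 2 * ⟪a, x⟫ + ‖x‖ ^ 2 := norm_sub_sq_real a x
          have hx2 : ‖x‖ ^ 2 = ((m + 1 : ℕ) : ℝ) := by rw [hxn, Real.sq_sqrt hdR.le]
          have hkey : ‖a‖ * s ≤ ⟪a, x⟫ := by nlinarith [sq_nonneg (‖a‖ - s)]
          show s ≤ ⟪u, x⟫
          rw [hudef, real_inner_smul_left, inv_mul_eq_div, le_div_iff₀ hna]
          linarith [hkey]
        · right; exact hxs
      have hμle : μ {x | ‖a - x‖ ≤ r} ≤ μ {x | s ≤ ⟪u, x⟫} := by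
        calc μ {x | ‖a - x‖ ≤ r} ≤ μ ({x | s ≤ ⟪u, x⟫} ∪ _) := measure_mono hsub
          _ ≤ μ {x | s ≤ ⟪u, x⟫} + μ (Metric.sphere (0 : EuclideanSpace ℝ (Fin (m + 1)))
              (Real.sqrt ((m + 1 : ℕ) : ℝ)))ᶜ := measure_union_le _ _
          _ = μ {x | s ≤ ⟪u, x⟫} := by rw [hcompl, add_zero]
      have hcap := cap_bound μ hsph hinv u hu hc0 hc1 hceq
      have h1c2 : 1 - c ^ 2 = τ₂ := by linarith
      rw [h1c2] at hcap
      have htoReal : (μ {x | ‖a - x‖ ≤ r}).toReal ≤ τ₂ ^ ((m : ℝ) / 2) :=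
        ENNReal.toReal_le_of_le_ofReal (by positivity) (le_trans hμle hcap)
      refine le_trans htoReal ?_
      have hcast : ((m + 1 : ℕ) : ℝ) / 2 = (m : ℝ) / 2 + (1 : ℝ) / 2 := by push_cast; ring
      have e1 : τ₂ ^ (((m + 1 : ℕ) : ℝ) / 2) = τ₂ ^ ((m : ℝ) / 2) * τ₂ ^ ((1 : ℝ) / 2) := by
        rw [hcast, Real.rpow_add hτ2pos]
      have e2 : (1:ℝ) ≤ (1 / τ) ^ ((1 : ℝ) / 2) * τ₂ ^ ((1 : ℝ) / 2) := by
        rw [← Real.mul_rpow (by positivity) hτ2pos.le]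
        have h3 : (1:ℝ) ≤ 1 / τ * τ₂ := by
          rw [show 1 / τ * τ₂ = τ₂ / τ by ring, le_div_iff₀ hτpos, one_mul]
          exact hτ
        calc (1:ℝ) = 1 ^ ((1:ℝ)/2) := (Real.one_rpow _).symm
          _ ≤ (1 / τ * τ₂) ^ ((1:ℝ)/2) := Real.rpow_le_rpow zero_le_one h3 (by norm_num)
      calc τ₂ ^ ((m : ℝ) / 2) = 1 * τ₂ ^ ((m : ℝ) / 2) := (one_mul _).symm
        _ ≤ ((1 / τ) ^ ((1 : ℝ) / 2) * τ₂ ^ ((1 : ℝ) / 2)) * τ₂ ^ ((m : ℝ) / 2) :=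
            mul_le_mul_of_nonneg_right e2 (by positivity)
        _ = (1 / τ) ^ ((1 : ℝ) / 2) * τ₂ ^ (((m + 1 : ℕ) : ℝ) / 2) := by
            rw [e1]; ring

end
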